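/- Let y = D/2 where D is the A_1 Dunkl operator with parameter k. If k = -1/2 - m for some m ∈ ℤ≥0, then the principal ideal (x^{2m+1}) in ℝ[x] is invariant under the operators x (multiplication), s (reflection), and y; in particular y(x^{2m+1}) = 0. -/
import Mathlib


open Polynomial

/-- The A₁ rational Dunkl operator on polynomials. -/
noncomputable def dunkl (k : ℝ) (f : ℝ[X]) : ℝ[X] :=
  derivative f + C k * ((f - f.comp (-X)) /ₘ X)

lemma dunkl_spec (m : ℕ) (k : ℝ) (g : ℝ[X]) :
    dunkl k ((X : ℝ[X]) ^ (2 * m + 1) * g) =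
      X ^ (2 * m) * ((C ((2 * m + 1 : ℕ) : ℝ) * g + X * derivative g)
        + C k * (g + g.comp (-X))) := by
  have hcomp : ((X : ℝ[X]) ^ (2 * m + 1) * g).comp (-X)
      = -(X ^ (2 * m + 1) * g.comp (-X)) := by
    rw [mul_comp, pow_comp, X_comp]
    rw [show ((-X : ℝ[X])) ^ (2 * m + 1) = -(X ^ (2 * m + 1)) by
      rw [neg_pow]; simp [pow_succ, pow_mul]]
    ring
  have hsub : (X : ℝ[X]) ^ (2 * m + 1) * g - ((X : ℝ[X]) ^ (2 * m + 1) * g).comp (-X)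
      = X * (X ^ (2 * m) * (g + g.comp (-X))) := by
    rw [hcomp]; ring_nf
  rw [dunkl, hsub, mul_divByMonic_cancel_left _ monic_X, derivative_mul,
    derivative_X_pow]
  push_cast
  ring

theorem ideal_invariant_at_singular_k (m : ℕ) (k : ℝ) (hk : k = -(1/2) - m) :
    (∀ f ∈ Ideal.span {(X : ℝ[X]) ^ (2 * m + 1)},
        X * f ∈ Ideal.span {(X : ℝ[X]) ^ (2 * m + 1)}) ∧
    (∀ f ∈ Ideal.span {(X : ℝ[X]) ^ (2 * m + 1)},
        f.comp (-X) ∈ Ideal.span {(X : ℝ[X]) ^ (2 * m + 1)}) ∧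
    (∀ f ∈ Ideal.span {(X : ℝ[X]) ^ (2 * m + 1)},
        (1/2 : ℝ) • dunkl k f ∈ Ideal.span {(X : ℝ[X]) ^ (2 * m + 1)}) ∧
    (1/2 : ℝ) • dunkl k ((X : ℝ[X]) ^ (2 * m + 1)) = 0 := by
  have hdunkl : ∀ g : ℝ[X],
      dunkl k ((X : ℝ[X]) ^ (2 * m + 1) * g)
        = X ^ (2 * m + 1) * (derivative g + C ((2 * m + 1 : ℝ) / 2) * ((g - g.comp (-X)) /ₘ X)) := by
    intro g
    have hx : (X : ℝ[X]) ∣ (g - g.comp (-X)) := by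
      rw [X_dvd_iff]
      simp [coeff_sub, coeff_zero_eq_eval_zero]
    obtain ⟨q, hq⟩ := hx
    have hqdiv : (g - g.comp (-X)) /ₘ X = q := by
      rw [hq, mul_divByMonic_cancel_left _ monic_X]
    rw [dunkl_spec, hqdiv]
    have hk2 : C k * (g + g.comp (-X))
        = -(C ((2 * m + 1 : ℕ) : ℝ) * g) + C ((2 * m + 1 : ℝ) / 2) * (g - g.comp (-X)) := by
      have hC : C k = -(C ((2 * m + 1 : ℕ) : ℝ)) + C ((2 * m + 1 : ℝ) / 2) := by
        rw [hk, ← map_neg, ← map_add]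
        congr 1
        push_cast; ring
      rw [hC, show ((2 * m + 1 : ℕ) : ℝ) = ((2 * m + 1 : ℝ) / 2) * 2 by push_cast; ring,
        map_mul, map_ofNat]
      ring
    rw [hk2, hq, pow_succ]
    ring
  refine ⟨fun f hf => Ideal.mul_mem_left _ _ hf, ?_, ?_, ?_⟩
  · intro f hf
    rw [Ideal.mem_span_singleton] at hf ⊢
    obtain ⟨g, rfl⟩ := hf
    refine ⟨-(g.comp (-X)), ?_⟩
    rw [mul_comp, pow_comp, X_comp]
    rw [show ((-X : ℝ[X])) ^ (2 * m + 1) = -(X ^ (2 * m + 1)) by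
      rw [neg_pow]; simp [pow_succ, pow_mul]]
    ring
  · intro f hf
    rw [Ideal.mem_span_singleton] at hf ⊢
    obtain ⟨g, rfl⟩ := hf
    rw [hdunkl g, Polynomial.smul_eq_C_mul]
    exact Dvd.dvd.mul_left ⟨_, rfl⟩ _
  · have := hdunkl 1
    rw [mul_one] at this
    rw [this]
    simp
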